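/- arXiv:2203.03687 — 2 statements merged into one kernel-verified Lean document; each statement's English description precedes it below -/
import Mathlib

section
/- Let 𝔖 be a set association scheme on Ω = [d] with d ≥ 2, and let m ≥ 2. Then the association scheme [m]^𝔖 is primitive if and only if 𝔖 is homogeneous and m ≥ 3. -/
namespace Paper


def diag (V : Type*) : Set (V × V) := {p | p.1 = p.2}

def IsCoherent {V : Type*} (X : Set (Set (V × V))) : Prop :=
  ∀ R ∈ X, ∀ S ∈ X, ∀ T ∈ X, ∃ p : ℕ, ∀ q : V × V, q ∈ R →
    {w : V | (q.1, w) ∈ S ∧ (w, q.2) ∈ T}.ncard = p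

def IsAssocScheme {V : Type*} (X : Set (Set (V × V))) : Prop :=
  Setoid.IsPartition X ∧ diag V ∈ X ∧
  (∀ R ∈ X, ∀ x y : V, (x, y) ∈ R → (y, x) ∈ R) ∧ IsCoherent X

def cellGraph {V : Type*} (R : Set (V × V)) : SimpleGraph V :=
  SimpleGraph.fromRel (fun x y => (x, y) ∈ R)

def IsPrimitiveScheme {V : Type*} (X : Set (Set (V × V))) : Prop :=
  ∀ R ∈ X, R ≠ diag V → (cellGraph R).Connected

def schemeAut {V : Type*} (X : Set (Set (V × V))) : Subgroup (Equiv.Perm V) where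
  carrier := {g | ∀ R ∈ X, ∀ x y : V, (x, y) ∈ R ↔ (g x, g y) ∈ R}
  one_mem' := by intro R _ x y; simp
  mul_mem' := by
    intro g h hg hh R hR x y
    have := (hh R hR x y).trans (hg R hR (h x) (h y))
    simpa using this
  inv_mem' := by
    intro g hg R hR x y
    have := (hg R hR (g⁻¹ x) (g⁻¹ y)).symm
    simpa using this

def IsTriangle {Ω : Type*} (a b c : Set Ω) : Prop :=
  a ⊆ b ∪ c ∧ b ⊆ a ∪ c ∧ c ⊆ a ∪ b

noncomputable def tripleType {Ω : Type*} (a b c : Set Ω) : ℕ × ℕ × ℕ × ℕ × ℕ × ℕ × ℕ :=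
  (a.ncard, b.ncard, c.ncard, (a ∩ b).ncard, (a ∩ c).ncard, (b ∩ c).ncard, (a ∩ b ∩ c).ncard)

noncomputable def typeCount {Ω : Type*} (β γ : Set (Set Ω)) (a : Set Ω) (τ : ℕ × ℕ × ℕ × ℕ × ℕ × ℕ × ℕ) : ℕ :=
  {p : Set Ω × Set Ω | p.1 ∈ β ∧ p.2 ∈ γ ∧ tripleType a p.1 p.2 = τ}.ncard

def IsSAS {Ω : Type*} (S : Set (Set (Set Ω))) : Prop :=
  Setoid.IsPartition S ∧
  (∀ α ∈ S, ∀ a ∈ α, ∀ a' ∈ α, Set.ncard a = Set.ncard a') ∧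
  (∀ α ∈ S, ∀ β ∈ S, ∀ γ ∈ S, ∀ a ∈ α, ∀ a' ∈ α,
    ∀ t₁ t₂ t₃ : Set Ω, IsTriangle t₁ t₂ t₃ →
      typeCount β γ a (tripleType t₁ t₂ t₃) = typeCount β γ a' (tripleType t₁ t₂ t₃))

def SetHomog {Ω : Type*} (S : Set (Set (Set Ω))) : Prop :=
  {a : Set Ω | ∃ v : Ω, a = {v}} ∈ S

def diffSet {m d : ℕ} (p : (Fin d → Fin m) × (Fin d → Fin m)) : Set (Fin d) :=
  {i | p.1 i ≠ p.2 i}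

def relOf (m d : ℕ) (α : Set (Set (Fin d))) : Set ((Fin d → Fin m) × (Fin d → Fin m)) :=
  {p | diffSet p ∈ α}

def mPow (m d : ℕ) (S : Set (Set (Set (Fin d)))) :
    Set (Set ((Fin d → Fin m) × (Fin d → Fin m))) :=
  {R | R.Nonempty ∧ ∃ α ∈ S, R = relOf m d α}

def tensorTrivial (m d : ℕ) : Set (Set ((Fin d → Fin m) × (Fin d → Fin m))) :=
  {R | R.Nonempty ∧ ∃ a : Set (Fin d), R = {p | diffSet p = a}}

def hammingScheme (m d : ℕ) : Set (Set ((Fin d → Fin m) × (Fin d → Fin m))) :=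
  {R | R.Nonempty ∧ ∃ t : ℕ, R = {p | (diffSet p).ncard = t}}

def Refines {W : Type*} (X X' : Set (Set W)) : Prop :=
  ∀ R ∈ X, ∃ R' ∈ X', R ⊆ R'

/-!
If some coordinate `j` lies in no member of a cell `α`, then moving along an edge of
`[m]^α` never changes coordinate `j`, so the graph is disconnected; with the cell of the
singletons this forces homogeneity. For `m = 2`, the cell of `[d]` only joins a word to its
complement, which preserves whether two given coordinates agree, so it is disconnected when
`d ≥ 2`. Conversely, in a homogeneous scheme the regularity of the triangle counts for the
triangle `({j}, a, a)` shows that the members of any non-trivial cell cover every coordinate;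
when `m ≥ 3` any single coordinate of a word can then be changed in two steps of that cell,
choosing an intermediate value different from both the old and the new one.
-/

lemma _root_.SimpleGraph.Reachable.apply_eq_of_adj {V β : Type*} {G : SimpleGraph V} (f : V → β)
    (hf : ∀ x y, G.Adj x y → f x = f y) {u w : V} (h : G.Reachable u w) : f u = f w := by
  obtain ⟨p⟩ := h
  induction p with
  | nil => rfl
  | cons hadj _ ih => exact (hf _ _ hadj).trans ih

section HammingCells

variable {m d : ℕ}

lemma diffSet_swap (p : (Fin d → Fin m) × (Fin d → Fin m)) : diffSet p.swap = diffSet p := by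
  ext i
  exact ne_comm

lemma diffSet_eq_empty_iff (p : (Fin d → Fin m) × (Fin d → Fin m)) :
    diffSet p = ∅ ↔ p.1 = p.2 := by
  simp [Set.eq_empty_iff_forall_notMem, diffSet, funext_iff]

lemma exists_diffSet_eq (hm : 2 ≤ m) (a : Set (Fin d)) :
    ∃ p : (Fin d → Fin m) × (Fin d → Fin m), diffSet p = a := by
  classical
  refine ⟨(fun _ => ⟨0, by omega⟩, fun i => if i ∈ a then ⟨1, by omega⟩ else ⟨0, by omega⟩), ?_⟩
  ext i
  by_cases hi : i ∈ a <;> simp [diffSet, hi]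

lemma cellGraph_relOf_adj {α : Set (Set (Fin d))} {x y : Fin d → Fin m} :
    (cellGraph (relOf m d α)).Adj x y ↔ x ≠ y ∧ diffSet (x, y) ∈ α := by
  rw [cellGraph, SimpleGraph.fromRel_adj]
  refine and_congr_right fun _ => or_iff_left_of_imp fun h => ?_
  exact show diffSet (x, y) ∈ α from diffSet_swap (y, x) ▸ h

lemma relOf_eq_diag {α : Set (Set (Fin d))} (hα : ∀ a ∈ α, a = ∅) (h₀ : ∅ ∈ α) :
    relOf m d α = diag (Fin d → Fin m) := by
  ext p
  simp only [relOf, diag, Set.mem_ofPred_eq, ← diffSet_eq_empty_iff]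
  exact ⟨hα _, fun h => h ▸ h₀⟩

lemma relOf_ne_diag (hm : 2 ≤ m) {α : Set (Set (Fin d))} {a : Set (Fin d)} (ha : a ∈ α)
    (hne : a.Nonempty) : relOf m d α ≠ diag (Fin d → Fin m) := by
  obtain ⟨p, hp⟩ := exists_diffSet_eq hm a
  intro h
  have hpd : p ∈ diag (Fin d → Fin m) := h ▸ show diffSet p ∈ α by rwa [hp]
  exact hne.ne_empty (hp ▸ (diffSet_eq_empty_iff p).2 hpd)

lemma coord_eq_of_reachable {α : Set (Set (Fin d))} {j : Fin d} (hj : ∀ a ∈ α, j ∉ a)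
    {u w : Fin d → Fin m} (h : (cellGraph (relOf m d α)).Reachable u w) : u j = w j :=
  h.apply_eq_of_adj (· j) fun x y hxy => by
    by_contra hne
    exact hj _ (cellGraph_relOf_adj.1 hxy).2 hne

lemma coord_eq_iff_of_reachable_two {α : Set (Set (Fin d))} {i j : Fin d}
    (hij : ∀ a ∈ α, (i ∈ a ↔ j ∈ a)) {u w : Fin d → Fin 2}
    (h : (cellGraph (relOf 2 d α)).Reachable u w) : (u i = u j ↔ w i = w j) := by
  refine Iff.of_eq (h.apply_eq_of_adj (fun x => x i = x j) fun x y hxy => propext ?_)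
  have hd : diffSet (x, y) ∈ α := (cellGraph_relOf_adj.1 hxy).2
  have hflip : ∀ a b c e : Fin 2, (a ≠ c ↔ b ≠ e) → (a = b ↔ c = e) := by decide
  exact hflip _ _ _ _ (hij _ hd)

lemma reachable_update (hm : 3 ≤ m) {α : Set (Set (Fin d))} {c : Set (Fin d)} (hc : c ∈ α)
    {i : Fin d} (hi : i ∈ c) (u : Fin d → Fin m) (x : Fin m) :
    (cellGraph (relOf m d α)).Reachable u (Function.update u i x) := by
  classical
  set w := Function.update u i x
  choose z hzu hzw using fun k => ENat.exists_ne_ne_of_three_le (by simpa using hm) (u k) (w k)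
  set v : Fin d → Fin m := fun k => if k ∈ c then z k else u k
  have hu : diffSet (u, v) = c := by
    ext k
    by_cases hk : k ∈ c <;> simp [diffSet, v, hk, Ne.symm (hzu k)]
  have hw : diffSet (v, w) = c := by
    ext k
    by_cases hk : k ∈ c
    · simp [diffSet, v, hk, hzw k]
    · have hki : k ≠ i := fun h => hk (h ▸ hi)
      simp [diffSet, v, hk, w, Function.update_of_ne hki]
  have hvi : v i = z i := if_pos hi
  have huv : (cellGraph (relOf m d α)).Adj u v :=
    cellGraph_relOf_adj.2 ⟨fun h => hzu i (by rw [← hvi, ← h]), hu ▸ hc⟩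
  have hvw : (cellGraph (relOf m d α)).Adj v w :=
    cellGraph_relOf_adj.2 ⟨fun h => hzw i (by rw [← hvi, h]), hw ▸ hc⟩
  exact huv.reachable.trans hvw.reachable

lemma reachable_of_forall_exists_mem (hm : 3 ≤ m) {α : Set (Set (Fin d))}
    (hcover : ∀ i, ∃ c ∈ α, i ∈ c) (u w : Fin d → Fin m) :
    (cellGraph (relOf m d α)).Reachable u w := by
  classical
  suffices h : ∀ s : Finset (Fin d), ∀ u, (∀ k ∉ s, u k = w k) →
      (cellGraph (relOf m d α)).Reachable u w from
    h Finset.univ u fun k hk => absurd (Finset.mem_univ k) hk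
  intro s
  induction s using Finset.induction_on with
  | empty => exact fun u h => (funext fun k => h k (Finset.notMem_empty k)) ▸ .rfl
  | insert i s _ ih =>
    intro u h
    obtain ⟨c, hc, hic⟩ := hcover i
    refine (reachable_update hm hc hic u (w i)).trans (ih _ fun k hk => ?_)
    by_cases hki : k = i
    · simp [hki]
    · rw [Function.update_of_ne hki]
      exact h k (by simp [hki, hk])

end HammingCells

lemma IsSAS.ncard_eq {Ω : Type*} {S : Set (Set (Set Ω))} (hS : IsSAS S) {α : Set (Set Ω)}
    (hα : α ∈ S) {a b : Set Ω} (ha : a ∈ α) (hb : b ∈ α) : b.ncard = a.ncard :=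
  hS.2.1 α hα b hb a ha

lemma IsSAS.exists_mem_of_mem {Ω : Type*} [Finite Ω] {S : Set (Set (Set Ω))} (hS : IsSAS S)
    (hhom : SetHomog S) {α : Set (Set Ω)} (hα : α ∈ S) {a : Set Ω} (ha : a ∈ α) {j : Ω}
    (hj : j ∈ a) (i : Ω) : ∃ b ∈ α, i ∈ b := by
  have htri : IsTriangle {j} a a :=
    ⟨Set.singleton_subset_iff.2 (Or.inl hj), Set.subset_union_right, Set.subset_union_right⟩
  have hpos : 0 < typeCount α α {j} (tripleType {j} a a) :=
    (Set.ncard_pos (Set.toFinite _)).2 ⟨(a, a), ha, ha, rfl⟩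
  rw [hS.2.2 _ hhom α hα α hα {j} ⟨j, rfl⟩ {i} ⟨i, rfl⟩ _ _ _ htri, typeCount] at hpos
  obtain ⟨⟨b, c⟩, hb, -, htype⟩ := (Set.ncard_pos (Set.toFinite _)).1 hpos
  have hib : ({i} ∩ b).ncard = ({j} ∩ a).ncard := congrArg (·.2.2.2.1) htype
  rw [Set.inter_eq_self_of_subset_left (Set.singleton_subset_iff.2 hj), Set.ncard_singleton]
    at hib
  obtain ⟨x, rfl, hxb⟩ := Set.nonempty_of_ncard_ne_zero (s := {i} ∩ b) (by omega)
  exact ⟨b, hb, hxb⟩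

lemma IsPrimitiveScheme.connected_cellGraph_relOf {m d : ℕ} {S : Set (Set (Set (Fin d)))}
    (hprim : IsPrimitiveScheme (mPow m d S)) (hm : 2 ≤ m) {α : Set (Set (Fin d))} (hα : α ∈ S)
    {a : Set (Fin d)} (ha : a ∈ α) (hne : a.Nonempty) : (cellGraph (relOf m d α)).Connected := by
  obtain ⟨p, hp⟩ := exists_diffSet_eq (m := m) hm a
  exact hprim _ ⟨⟨p, show diffSet p ∈ α by rwa [hp]⟩, α, hα, rfl⟩ (relOf_ne_diag hm ha hne)

lemma IsPrimitiveScheme.setHomog {m d : ℕ} (hd : 1 ≤ d) (hm : 2 ≤ m)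
    {S : Set (Set (Set (Fin d)))} (hS : IsSAS S) (hprim : IsPrimitiveScheme (mPow m d S)) :
    SetHomog S := by
  let j₀ : Fin d := ⟨0, hd⟩
  obtain ⟨σ, ⟨hσ, hj₀⟩, -⟩ := hS.1.2 {j₀}
  have hsing : ∀ c ∈ σ, ∃ v, c = {v} := fun c hc =>
    Set.ncard_eq_one.1 ((hS.ncard_eq hσ hj₀ hc).trans (Set.ncard_singleton j₀))
  have hconn := hprim.connected_cellGraph_relOf hm hσ hj₀ (Set.singleton_nonempty j₀)
  have hcover : ∀ j, {j} ∈ σ := by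
    intro j
    by_contra hj
    have hj' : ∀ c ∈ σ, j ∉ c := by
      intro c hc hjc
      obtain ⟨v, rfl⟩ := hsing c hc
      exact hj (Set.mem_singleton_iff.1 hjc ▸ hc)
    obtain ⟨p, hp⟩ := exists_diffSet_eq (m := m) hm {j}
    exact (hp.symm ▸ Set.mem_singleton j : j ∈ diffSet p)
      (coord_eq_of_reachable hj' (hconn.preconnected p.1 p.2))
  have hσeq : {a : Set (Fin d) | ∃ v, a = {v}} = σ := by
    ext c
    exact ⟨fun ⟨v, hv⟩ => hv ▸ hcover v, hsing c⟩
  rw [SetHomog, hσeq]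
  exact hσ

lemma IsPrimitiveScheme.three_le {m d : ℕ} (hd : 2 ≤ d) (hm : 2 ≤ m)
    {S : Set (Set (Set (Fin d)))} (hS : IsSAS S) (hprim : IsPrimitiveScheme (mPow m d S)) :
    3 ≤ m := by
  by_contra hm3
  obtain rfl : m = 2 := by omega
  obtain ⟨α, ⟨hα, huniv⟩, -⟩ := hS.1.2 Set.univ
  have hαuniv : ∀ c ∈ α, c = Set.univ := fun c hc => by
    by_contra hcu
    have := Set.ncard_lt_card hcu
    rw [hS.ncard_eq hα huniv hc, Set.ncard_univ] at this
    exact this.false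
  let i : Fin d := ⟨0, by omega⟩
  let j : Fin d := ⟨1, by omega⟩
  have hconn := hprim.connected_cellGraph_relOf le_rfl hα huniv ⟨i, trivial⟩
  have hij : ∀ c ∈ α, (i ∈ c ↔ j ∈ c) := fun c hc => by simp [hαuniv c hc]
  let u : Fin d → Fin 2 := 0
  have h := coord_eq_iff_of_reachable_two hij (hconn.preconnected u (Function.update u i 1))
  have hji : j ≠ i := Fin.ne_of_val_ne (by simp [i, j])
  simp [u, hji, Function.update_of_ne] at h

theorem stmt6 (m d : ℕ) (hd : 2 ≤ d) (hm : 2 ≤ m)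
    (S : Set (Set (Set (Fin d)))) (hS : IsSAS S) :
    IsPrimitiveScheme (mPow m d S) ↔ (SetHomog S ∧ 3 ≤ m) := by
  refine ⟨fun hprim => ⟨hprim.setHomog (by omega) hm hS, hprim.three_le hd hm hS⟩, ?_⟩
  rintro ⟨hhom, hm3⟩ R ⟨⟨p, hp⟩, α, hα, rfl⟩ hdiag
  obtain ⟨j, hj⟩ : (diffSet p).Nonempty := by
    by_contra hempty
    rw [Set.not_nonempty_iff_eq_empty] at hempty
    have hα₀ : ∀ c ∈ α, c = ∅ := fun c hc =>
      (Set.ncard_eq_zero).1 ((hS.ncard_eq hα hp hc).trans (by rw [hempty, Set.ncard_empty]))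
    exact hdiag (relOf_eq_diag hα₀ (hempty ▸ hp))
  have : Nonempty (Fin d → Fin m) := ⟨fun _ => ⟨0, by omega⟩⟩
  exact ⟨reachable_of_forall_exists_mem hm3 (hS.exists_mem_of_mem hhom hα hp hj)⟩

end Paper
end

section
/- Let 𝔖 and 𝔖' be set association schemes on finite sets Ω and Ω'. Then the direct sum 𝔖 ⊕ 𝔖' is a set association scheme on the disjoint union Ω ⊔ Ω'; its rank equals rank(𝔖)·rank(𝔖'); and Aut(𝔖 ⊕ 𝔖') = Aut(𝔖) × Aut(𝔖'), i.e., a permutation of Ω ⊔ Ω' preserves every cell of 𝔖 ⊕ 𝔖' if and only if it maps Ω to Ω and Ω' to Ω' and restricts to an automorphism of 𝔖 on Ω and to an automorphism of 𝔖' on Ω'. -/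
namespace Paper


def setAutGroup {Ω : Type*} (S : Set (Set (Set Ω))) : Subgroup (Equiv.Perm Ω) where
  carrier := {π | ∀ α ∈ S, ∀ a : Set Ω, a ∈ α ↔ ⇑π '' a ∈ α}
  one_mem' := by intro α hα a; simp
  mul_mem' := by
    intro g h hg hh α hα a
    have h1 : ⇑(g * h) '' a = ⇑g '' (⇑h '' a) := by
      rw [Equiv.Perm.coe_mul, Set.image_comp]
    rw [h1]
    exact (hh α hα a).trans (hg α hα (⇑h '' a))
  inv_mem' := by
    intro g hg α hα a
    have h0 := hg α hα (⇑g⁻¹ '' a)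
    have h2 : ⇑g '' (⇑g⁻¹ '' a) = a := by
      simp [← Set.image_comp]
    rw [h2] at h0
    exact h0.symm

def SetSchurian {Ω : Type*} (S : Set (Set (Set Ω))) : Prop :=
  S = Set.range (fun a : Set Ω => {b : Set Ω | ∃ π ∈ setAutGroup S, b = ⇑π '' a})

def cellSum {Ω Ω' : Type*} (α : Set (Set Ω)) (α' : Set (Set Ω')) : Set (Set (Ω ⊕ Ω')) :=
  {s | ∃ a ∈ α, ∃ a' ∈ α', s = Sum.inl '' a ∪ Sum.inr '' a'}

def directSum {Ω Ω' : Type*} (S : Set (Set (Set Ω))) (S' : Set (Set (Set Ω'))) :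
    Set (Set (Set (Ω ⊕ Ω'))) :=
  {c | ∃ α ∈ S, ∃ α' ∈ S', c = cellSum α α'}

/-!
A set of `Ω ⊕ Ω'` is a pair of sets of `Ω` and `Ω'` (`Set.sumEquiv`), with componentwise
intersections and unions. So the type of a triple in `Ω ⊕ Ω'` is the sum of the types of its two
components, and it is a triangle iff both components are. The number of pairs from two cells of the
direct sum forming a triangle of type `τ` with `a ⊔ a'` is therefore the convolution
`∑_{σ + σ' = τ} n(a, σ) n'(a', σ')` of the counts in the two schemes, and a nonzero term forces `σ`
and `σ'` to be triangle types, so that each term depends only on the cells of `a` and `a'`.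

An automorphism of the direct sum preserves the cells `α ⊕ {∅}`, hence maps points of `Ω` to points
of `Ω` and splits as `f ⊕ f'`; testing it on the sets `a ⊔ ∅` and `∅ ⊔ a'` shows that `f` and `f'`
are automorphisms.
-/

open Set

local notation "𝕋" => ℕ × ℕ × ℕ × ℕ × ℕ × ℕ × ℕ

def IsTriangleType (Ω : Type*) (τ : 𝕋) : Prop :=
  ∃ t₁ t₂ t₃ : Set Ω, IsTriangle t₁ t₂ t₃ ∧ tripleType t₁ t₂ t₃ = τ

section Triangle

variable {Ω Ω' : Type*} [Finite Ω] [Finite Ω']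

theorem subset_union_iff_ncard (a b c : Set Ω) :
    a ⊆ b ∪ c ↔ a.ncard + (a ∩ b ∩ c).ncard = (a ∩ b).ncard + (a ∩ c).ncard := by
  have hunion := ncard_union_add_ncard_inter (a ∩ b) (a ∩ c) (toFinite _) (toFinite _)
  rw [← inter_union_distrib_left, ← inter_inter_distrib_left, ← inter_assoc] at hunion
  have hcard : a ∩ (b ∪ c) = a ↔ (a ∩ (b ∪ c)).ncard = a.ncard :=
    ⟨congrArg _, fun h => eq_of_subset_of_ncard_le inter_subset_left h.ge⟩
  rw [← inter_eq_left, hcard]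
  omega

theorem isTriangle_iff_ncard (a b c : Set Ω) :
    IsTriangle a b c ↔
      a.ncard + (a ∩ b ∩ c).ncard = (a ∩ b).ncard + (a ∩ c).ncard ∧
      b.ncard + (a ∩ b ∩ c).ncard = (a ∩ b).ncard + (b ∩ c).ncard ∧
      c.ncard + (a ∩ b ∩ c).ncard = (a ∩ c).ncard + (b ∩ c).ncard := by
  rw [IsTriangle, subset_union_iff_ncard, subset_union_iff_ncard, subset_union_iff_ncard,
    inter_comm b a, inter_comm c a, inter_comm c b, inter_right_comm a c b]

theorem IsTriangle.of_tripleType_eq {a b c : Set Ω} {a' b' c' : Set Ω'}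
    (h : tripleType a b c = tripleType a' b' c') (ht : IsTriangle a b c) :
    IsTriangle a' b' c' := by
  simp only [tripleType, Prod.mk.injEq] at h
  rw [isTriangle_iff_ncard] at ht ⊢
  omega

end Triangle

section SumSets

variable {Ω Ω' : Type*}

theorem ncard_sumEquiv_symm [Finite Ω] [Finite Ω'] (a : Set Ω) (a' : Set Ω') :
    (sumEquiv.symm (a, a')).ncard = a.ncard + a'.ncard := by
  rw [sumEquiv_symm_apply, ncard_union_eq disjoint_image_inl_image_inr,
    ncard_image_of_injective _ Sum.inl_injective, ncard_image_of_injective _ Sum.inr_injective]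

theorem tripleType_sumEquiv_symm [Finite Ω] [Finite Ω'] (a b c : Set Ω) (a' b' c' : Set Ω') :
    tripleType (sumEquiv.symm (a, a')) (sumEquiv.symm (b, b')) (sumEquiv.symm (c, c')) =
      tripleType a b c + tripleType a' b' c' := by
  simp only [tripleType, ← inf_eq_inter, ← map_inf, Prod.mk_inf_mk, ncard_sumEquiv_symm,
    Prod.mk_add_mk]

theorem isTriangle_sumEquiv_symm_iff {a b c : Set Ω} {a' b' c' : Set Ω'} :
    IsTriangle (sumEquiv.symm (a, a')) (sumEquiv.symm (b, b')) (sumEquiv.symm (c, c')) ↔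
      IsTriangle a b c ∧ IsTriangle a' b' c' := by
  simp only [IsTriangle, ← sup_eq_union, ← map_sup, OrderIso.le_iff_le,
    Prod.mk_sup_mk, Prod.mk_le_mk]
  tauto

theorem image_sumCongr_sumEquiv_symm (f : Equiv.Perm Ω) (f' : Equiv.Perm Ω') (a : Set Ω)
    (a' : Set Ω') :
    ⇑(Equiv.sumCongr f f') '' sumEquiv.symm (a, a') = sumEquiv.symm (f '' a, f' '' a') := by
  simp only [sumEquiv_symm_apply, image_union, image_image, Equiv.sumCongr_apply, Sum.map_inl,
    Sum.map_inr]

end SumSets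

section DirectSum

variable {Ω Ω' : Type*} {S : Set (Set (Set Ω))} {S' : Set (Set (Set Ω'))}

theorem cellSum_eq_preimage (α : Set (Set Ω)) (α' : Set (Set Ω')) :
    cellSum α α' = sumEquiv ⁻¹' (α ×ˢ α') := by
  ext s
  constructor
  · rintro ⟨a, ha, a', ha', rfl⟩
    change sumEquiv (sumEquiv.symm (a, a')) ∈ α ×ˢ α'
    rw [OrderIso.apply_symm_apply]
    exact ⟨ha, ha'⟩
  · intro hs
    exact ⟨_, hs.1, _, hs.2, (image_preimage_inl_union_image_preimage_inr s).symm⟩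

theorem sumEquiv_symm_mem_cellSum {α : Set (Set Ω)} {α' : Set (Set Ω')} {a : Set Ω}
    {a' : Set Ω'} : sumEquiv.symm (a, a') ∈ cellSum α α' ↔ a ∈ α ∧ a' ∈ α' := by
  rw [cellSum_eq_preimage, mem_preimage, OrderIso.apply_symm_apply]
  rfl

theorem mem_cellSum_iff {α : Set (Set Ω)} {α' : Set (Set Ω')} {s : Set (Ω ⊕ Ω')} :
    s ∈ cellSum α α' ↔ Sum.inl ⁻¹' s ∈ α ∧ Sum.inr ⁻¹' s ∈ α' := by
  rw [cellSum_eq_preimage]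
  rfl

theorem isPartition_directSum (hS : Setoid.IsPartition S) (hS' : Setoid.IsPartition S') :
    Setoid.IsPartition (directSum S S') := by
  refine ⟨?_, fun s => ?_⟩
  · rintro ⟨α, hα, α', hα', hempty⟩
    obtain ⟨a, ha⟩ := nonempty_iff_ne_empty.2 (ne_of_mem_of_not_mem hα hS.1)
    obtain ⟨a', ha'⟩ := nonempty_iff_ne_empty.2 (ne_of_mem_of_not_mem hα' hS'.1)
    exact (hempty ▸ sumEquiv_symm_mem_cellSum.2 ⟨ha, ha'⟩ : sumEquiv.symm (a, a') ∈ ∅)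
  obtain ⟨α, ⟨hα, hsα⟩, hαuniq⟩ := hS.2 (Sum.inl ⁻¹' s)
  obtain ⟨α', ⟨hα', hsα'⟩, hα'uniq⟩ := hS'.2 (Sum.inr ⁻¹' s)
  refine ⟨cellSum α α', ⟨⟨α, hα, α', hα', rfl⟩, mem_cellSum_iff.2 ⟨hsα, hsα'⟩⟩, ?_⟩
  rintro _ ⟨⟨β, hβ, β', hβ', rfl⟩, hs⟩
  rw [mem_cellSum_iff] at hs
  rw [hαuniq β ⟨hβ, hs.1⟩, hα'uniq β' ⟨hβ', hs.2⟩]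

theorem ncard_directSum (hS : ∅ ∉ S) (hS' : ∅ ∉ S') :
    (directSum S S').ncard = S.ncard * S'.ncard := by
  have himage : directSum S S' = (fun p => cellSum p.1 p.2) '' (S ×ˢ S') := by
    ext c
    simp [directSum, eq_comm]
  rw [himage, InjOn.ncard_image, ncard_prod]
  rintro ⟨α, α'⟩ ⟨hα, hα'⟩ ⟨β, β'⟩ - heq
  have hne : (α ×ˢ α').Nonempty :=
    (nonempty_iff_ne_empty.2 (ne_of_mem_of_not_mem hα hS)).prod
      (nonempty_iff_ne_empty.2 (ne_of_mem_of_not_mem hα' hS'))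
  simp only [cellSum_eq_preimage] at heq
  rw [Prod.mk.injEq, ← prod_eq_prod_iff_of_nonempty hne]
  exact preimage_injective.2 sumEquiv.surjective heq

end DirectSum

theorem finite_setOf_add_eq {M : Type*} [AddCommMonoid M] [PartialOrder M]
    [CanonicallyOrderedAdd M] [LocallyFiniteOrderBot M] (m : M) :
    {p : M × M | p.1 + p.2 = m}.Finite := by
  refine ((finite_Iic m).prod (finite_Iic m)).subset ?_
  rintro ⟨x, y⟩ (rfl : x + y = _)
  exact ⟨le_self_add, le_add_self⟩

section TypeCount

variable {Ω Ω' : Type*} [Finite Ω] [Finite Ω']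

theorem typeCount_cellSum (β γ : Set (Set Ω)) (β' γ' : Set (Set Ω')) (a : Set Ω) (a' : Set Ω')
    (τ : 𝕋) :
    typeCount (cellSum β β') (cellSum γ γ') (sumEquiv.symm (a, a')) τ =
      ∑ᶠ σ ∈ {σ : 𝕋 × 𝕋 | σ.1 + σ.2 = τ}, typeCount β γ a σ.1 * typeCount β' γ' a' σ.2 := by
  let P (σ : 𝕋) : Set (Set Ω × Set Ω) := {p | p.1 ∈ β ∧ p.2 ∈ γ ∧ tripleType a p.1 p.2 = σ}
  let P' (σ : 𝕋) : Set (Set Ω' × Set Ω') :=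
    {p | p.1 ∈ β' ∧ p.2 ∈ γ' ∧ tripleType a' p.1 p.2 = σ}
  let φ : (Set Ω × Set Ω) × (Set Ω' × Set Ω') ≃ Set (Ω ⊕ Ω') × Set (Ω ⊕ Ω') :=
    (Equiv.prodProdProdComm _ _ _ _).trans (sumEquiv.symm.toEquiv.prodCongr sumEquiv.symm.toEquiv)
  have hpreimage : φ ⁻¹' {p | p.1 ∈ cellSum β β' ∧ p.2 ∈ cellSum γ γ' ∧
      tripleType (sumEquiv.symm (a, a')) p.1 p.2 = τ} =
      ⋃ σ ∈ {σ : 𝕋 × 𝕋 | σ.1 + σ.2 = τ}, P σ.1 ×ˢ P' σ.2 := by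
    ext ⟨⟨b, c⟩, b', c'⟩
    change (sumEquiv.symm (b, b') ∈ cellSum β β' ∧ sumEquiv.symm (c, c') ∈ cellSum γ γ' ∧
      tripleType (sumEquiv.symm (a, a')) (sumEquiv.symm (b, b')) (sumEquiv.symm (c, c')) = τ) ↔ _
    rw [sumEquiv_symm_mem_cellSum, sumEquiv_symm_mem_cellSum, tripleType_sumEquiv_symm,
      mem_iUnion₂]
    constructor
    · rintro ⟨⟨hb, hb'⟩, ⟨hc, hc'⟩, hτ⟩
      exact ⟨(tripleType a b c, tripleType a' b' c'), hτ, ⟨hb, hc, rfl⟩, hb', hc', rfl⟩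
    · rintro ⟨⟨σ, σ'⟩, hσ, ⟨hb, hc, hbc⟩, hb', hc', hbc'⟩
      exact ⟨⟨hb, hb'⟩, ⟨hc, hc'⟩, hbc ▸ hbc' ▸ hσ⟩
  have hdisjoint : {σ : 𝕋 × 𝕋 | σ.1 + σ.2 = τ}.PairwiseDisjoint fun σ => P σ.1 ×ˢ P' σ.2 := by
    intro σ _ σ' _ hne
    refine disjoint_left.2 ?_
    rintro w ⟨⟨-, -, h₁⟩, -, -, h₂⟩ ⟨⟨-, -, h₁'⟩, -, -, h₂'⟩
    exact hne (Prod.ext (h₁.symm.trans h₁') (h₂.symm.trans h₂'))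
  rw [typeCount, ← ncard_preimage_of_injective_subset_range φ.injective (by simp), hpreimage,
    (finite_setOf_add_eq τ).ncard_biUnion (fun _ _ => toFinite _) hdisjoint]
  simp only [ncard_prod]
  rfl

theorem isTriangleType_of_typeCount_mul_ne_zero {β γ : Set (Set Ω)} {β' γ' : Set (Set Ω')}
    {a : Set Ω} {a' : Set Ω'} {σ σ' : 𝕋}
    (hne : typeCount β γ a σ * typeCount β' γ' a' σ' ≠ 0)
    (hτ : IsTriangleType (Ω ⊕ Ω') (σ + σ')) :
    IsTriangleType Ω σ ∧ IsTriangleType Ω' σ' := by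
  obtain ⟨⟨b, c⟩, -, -, rfl⟩ := nonempty_of_ncard_ne_zero (left_ne_zero_of_mul hne)
  obtain ⟨⟨b', c'⟩, -, -, rfl⟩ := nonempty_of_ncard_ne_zero (right_ne_zero_of_mul hne)
  obtain ⟨t₁, t₂, t₃, ht, htype⟩ := hτ
  rw [← tripleType_sumEquiv_symm] at htype
  obtain ⟨h, h'⟩ := isTriangle_sumEquiv_symm_iff.1 (ht.of_tripleType_eq htype)
  exact ⟨⟨a, b, c, h, rfl⟩, ⟨a', b', c', h', rfl⟩⟩

end TypeCount

theorem IsSAS.typeCount_eq {Ω : Type*} {S : Set (Set (Set Ω))} (hS : IsSAS S)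
    {α β γ : Set (Set Ω)} (hα : α ∈ S) (hβ : β ∈ S) (hγ : γ ∈ S) {a₁ a₂ : Set Ω} (ha₁ : a₁ ∈ α)
    (ha₂ : a₂ ∈ α) {τ : 𝕋} (hτ : IsTriangleType Ω τ) :
    typeCount β γ a₁ τ = typeCount β γ a₂ τ := by
  obtain ⟨t₁, t₂, t₃, ht, rfl⟩ := hτ
  exact hS.2.2 α hα β hβ γ hγ a₁ ha₁ a₂ ha₂ t₁ t₂ t₃ ht

section DirectSumIsSAS

variable {Ω Ω' : Type*} [Finite Ω] [Finite Ω'] {S : Set (Set (Set Ω))} {S' : Set (Set (Set Ω'))}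

theorem IsSAS.typeCount_mul_eq (hS : IsSAS S) (hS' : IsSAS S')
    {α β γ : Set (Set Ω)} (hα : α ∈ S) (hβ : β ∈ S) (hγ : γ ∈ S)
    {α' β' γ' : Set (Set Ω')} (hα' : α' ∈ S') (hβ' : β' ∈ S') (hγ' : γ' ∈ S')
    {a₁ a₂ : Set Ω} (ha₁ : a₁ ∈ α) (ha₂ : a₂ ∈ α) {a₁' a₂' : Set Ω'} (ha₁' : a₁' ∈ α')
    (ha₂' : a₂' ∈ α') {σ σ' : 𝕋} (hτ : IsTriangleType (Ω ⊕ Ω') (σ + σ')) :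
    typeCount β γ a₁ σ * typeCount β' γ' a₁' σ' =
      typeCount β γ a₂ σ * typeCount β' γ' a₂' σ' := by
  by_cases hσ : IsTriangleType Ω σ ∧ IsTriangleType Ω' σ'
  · rw [hS.typeCount_eq hα hβ hγ ha₁ ha₂ hσ.1, hS'.typeCount_eq hα' hβ' hγ' ha₁' ha₂' hσ.2]
  · have hzero (a : Set Ω) (a' : Set Ω') : typeCount β γ a σ * typeCount β' γ' a' σ' = 0 :=
      by_contra fun hne => hσ (isTriangleType_of_typeCount_mul_ne_zero hne hτ)
    rw [hzero, hzero]

theorem IsSAS.directSum (hS : IsSAS S) (hS' : IsSAS S') : IsSAS (directSum S S') := by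
  refine ⟨isPartition_directSum hS.1 hS'.1, ?_, ?_⟩
  · rintro _ ⟨α, hα, α', hα', rfl⟩ s₁ hs₁ s₂ hs₂
    rw [cellSum_eq_preimage] at hs₁ hs₂
    rw [← sumEquiv.symm_apply_apply s₁, ← sumEquiv.symm_apply_apply s₂, ncard_sumEquiv_symm,
      ncard_sumEquiv_symm, hS.2.1 α hα _ hs₁.1 _ hs₂.1, hS'.2.1 α' hα' _ hs₁.2 _ hs₂.2]
  · rintro _ ⟨α, hα, α', hα', rfl⟩ _ ⟨β, hβ, β', hβ', rfl⟩ _ ⟨γ, hγ, γ', hγ', rfl⟩ s₁ hs₁ s₂ hs₂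
      t₁ t₂ t₃ ht
    rw [cellSum_eq_preimage] at hs₁ hs₂
    rw [← sumEquiv.symm_apply_apply s₁, ← sumEquiv.symm_apply_apply s₂, typeCount_cellSum,
      typeCount_cellSum]
    refine finsum_mem_congr rfl fun σ (hσ : σ.1 + σ.2 = _) => ?_
    exact hS.typeCount_mul_eq hS' hα hβ hγ hα' hβ' hγ' hs₁.1 hs₂.1 hs₁.2 hs₂.2
      ⟨t₁, t₂, t₃, ht, hσ.symm⟩

end DirectSumIsSAS

theorem IsSAS.singleton_empty_mem {Ω : Type*} [Finite Ω] {S : Set (Set (Set Ω))} (hS : IsSAS S) :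
    ({∅} : Set (Set Ω)) ∈ S := by
  obtain ⟨α, ⟨hα, hempty⟩, -⟩ := hS.1.2 ∅
  convert hα
  refine (eq_singleton_iff_unique_mem.2 ⟨hempty, fun a ha => ?_⟩).symm
  rw [← ncard_eq_zero, hS.2.1 α hα a ha ∅ hempty, ncard_empty]

section Automorphisms

variable {Ω Ω' : Type*} {S : Set (Set (Set Ω))} {S' : Set (Set (Set Ω'))}

theorem sumCongr_mem_setAutGroup_directSum_iff (hS : Setoid.IsPartition S)
    (hS' : Setoid.IsPartition S') {f : Equiv.Perm Ω} {f' : Equiv.Perm Ω'} :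
    Equiv.sumCongr f f' ∈ setAutGroup (directSum S S') ↔
      f ∈ setAutGroup S ∧ f' ∈ setAutGroup S' := by
  constructor
  · intro h
    obtain ⟨α₀, ⟨hα₀, hempty⟩, -⟩ := hS.2 ∅
    obtain ⟨α₀', ⟨hα₀', hempty'⟩, -⟩ := hS'.2 ∅
    constructor
    · intro α hα a
      have := h (cellSum α α₀') ⟨α, hα, α₀', hα₀', rfl⟩ (sumEquiv.symm (a, ∅))
      rwa [image_sumCongr_sumEquiv_symm, image_empty, sumEquiv_symm_mem_cellSum,
        sumEquiv_symm_mem_cellSum, and_iff_left hempty', and_iff_left hempty'] at this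
    · intro α' hα' a'
      have := h (cellSum α₀ α') ⟨α₀, hα₀, α', hα', rfl⟩ (sumEquiv.symm (∅, a'))
      rwa [image_sumCongr_sumEquiv_symm, image_empty, sumEquiv_symm_mem_cellSum,
        sumEquiv_symm_mem_cellSum, and_iff_right hempty, and_iff_right hempty] at this
  · rintro ⟨hf, hf'⟩ _ ⟨α, hα, α', hα', rfl⟩ s
    rw [← sumEquiv.symm_apply_apply s, image_sumCongr_sumEquiv_symm, sumEquiv_symm_mem_cellSum,
      sumEquiv_symm_mem_cellSum]
    exact and_congr (hf α hα _) (hf' α' hα' _)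

theorem mapsTo_inl_of_mem_setAutGroup_directSum (hS : Setoid.IsPartition S)
    (hS' : ({∅} : Set (Set Ω')) ∈ S') {g : Equiv.Perm (Ω ⊕ Ω')}
    (hg : g ∈ setAutGroup (directSum S S')) : MapsTo g (range Sum.inl) (range Sum.inl) := by
  rintro _ ⟨x, rfl⟩
  obtain ⟨α, ⟨hα, hx⟩, -⟩ := hS.2 {x}
  have hpoint : sumEquiv.symm ({x}, (∅ : Set Ω')) = {Sum.inl x} := by simp
  have hmem := (hg (cellSum α {∅}) ⟨α, hα, {∅}, hS', rfl⟩ _).1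
    (sumEquiv_symm_mem_cellSum.2 ⟨hx, rfl⟩)
  rw [hpoint, image_singleton, mem_cellSum_iff] at hmem
  cases hgx : g (Sum.inl x) with
  | inl y => exact ⟨y, rfl⟩
  | inr y =>
    rw [hgx] at hmem
    exact (hmem.2.subset (rfl : Sum.inr y ∈ ({Sum.inr y} : Set (Ω ⊕ Ω')))).elim

theorem mem_setAutGroup_directSum_iff [Finite Ω] [Finite Ω'] (hS : IsSAS S)
    (hS' : IsSAS S') (g : Equiv.Perm (Ω ⊕ Ω')) :
    g ∈ setAutGroup (directSum S S') ↔
      ∃ f ∈ setAutGroup S, ∃ f' ∈ setAutGroup S', g = Equiv.sumCongr f f' := by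
  constructor
  · intro hg
    obtain ⟨⟨f, f'⟩, rfl⟩ := Equiv.Perm.mem_sumCongrHom_range_of_perm_mapsTo_inl
      (mapsTo_inl_of_mem_setAutGroup_directSum hS.1 hS'.singleton_empty_mem hg)
    obtain ⟨hf, hf'⟩ := (sumCongr_mem_setAutGroup_directSum_iff hS.1 hS'.1).1 hg
    exact ⟨f, hf, f', hf', rfl⟩
  · rintro ⟨f, hf, f', hf', rfl⟩
    exact (sumCongr_mem_setAutGroup_directSum_iff hS.1 hS'.1).2 ⟨hf, hf'⟩

end Automorphisms

theorem stmt9 {Ω Ω' : Type*} [Finite Ω] [Finite Ω']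
    (S : Set (Set (Set Ω))) (S' : Set (Set (Set Ω')))
    (hS : IsSAS S) (hS' : IsSAS S') :
    IsSAS (directSum S S') ∧
    (directSum S S').ncard = S.ncard * S'.ncard ∧
    (∀ g : Equiv.Perm (Ω ⊕ Ω'),
      g ∈ setAutGroup (directSum S S') ↔
      ∃ f ∈ setAutGroup S, ∃ f' ∈ setAutGroup S', g = Equiv.sumCongr f f') :=
  ⟨hS.directSum hS', ncard_directSum hS.1.1 hS'.1.1, mem_setAutGroup_directSum_iff hS hS'⟩

end Paper
end
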